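/- Every 3×3 signed permutation matrix maps the Peres set PS to itself (as a set of rays); moreover, for any two rays u, v ∈ PS whose spanning vectors have the same multiset of absolute values of coordinates (i.e. u and v are of the same type), there exists a 3×3 signed permutation matrix g such that g maps the ray u to the ray v. -/

import Mathlib

noncomputable section

/-- Vectors in `ℝ³`. -/
abbrev V3 : Type := Fin 3 → ℝ

/-- The standard inner product on `ℝ³`. -/
def dot3 (x y : V3) : ℝ := x 0 * y 0 + x 1 * y 1 + x 2 * y 2

/-- The multiset of absolute values of the coordinates of a vector in `ℝ³`. -/
def absCoords (x : V3) : Multiset ℝ := {|x 0|, |x 1|, |x 2|}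

/-- The Peres set `PS`: the 33 rays (1-dimensional linear subspaces) of `ℝ³` spanned by
nonzero vectors whose multiset of absolute values of coordinates is one of
`{0,0,1}`, `{0,1,1}`, `{0,1,2}`, `{1,1,2}`. -/
def PeresSet : Set (Submodule ℝ V3) :=
  {L | ∃ v : V3, v ≠ 0 ∧ L = Submodule.span ℝ {v} ∧
    (absCoords v = {0, 0, 1} ∨ absCoords v = {0, 1, 1} ∨
      absCoords v = {0, 1, 2} ∨ absCoords v = {1, 1, 2})}

/-- Two rays are orthogonal if their elements are orthogonal for the standard
inner product on `ℝ³`. -/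
def RayOrtho (L M : Submodule ℝ V3) : Prop := ∀ x ∈ L, ∀ y ∈ M, dot3 x y = 0

/-- Three mutually orthogonal rays. -/
def MutuallyOrtho (L M N : Submodule ℝ V3) : Prop :=
  RayOrtho L M ∧ RayOrtho L N ∧ RayOrtho M N

/-- The two colours. -/
inductive Colour : Type
  | green
  | red
deriving DecidableEq

/-- A colouring of the Peres set. -/
def Colouring : Type := {L : Submodule ℝ V3 // L ∈ PeresSet} → Colour

/-- The PKS events: subsets of the space `Ω` of colourings of the form
`R_B` (all three rays of a triple `B` of mutually orthogonal rays of `PS` coloured red)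
or `G_P` (both rays of an orthogonal pair `P` in `PS` coloured green). -/
def IsPKSEvent (E : Set Colouring) : Prop :=
  (∃ u v w : {L : Submodule ℝ V3 // L ∈ PeresSet}, MutuallyOrtho u.1 v.1 w.1 ∧
      E = {γ : Colouring | γ u = Colour.red ∧ γ v = Colour.red ∧ γ w = Colour.red}) ∨
  (∃ u v : {L : Submodule ℝ V3 // L ∈ PeresSet}, RayOrtho u.1 v.1 ∧
      E = {γ : Colouring | γ u = Colour.green ∧ γ v = Colour.green})

/-- The multiplicative co-event `A*` with support `A`: `A*(B) = 1` iff `A ⊆ B`. -/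
def coevent (A : Set Colouring) : Set Colouring → ZMod 2 :=
  open scoped Classical in fun B => if A ⊆ B then 1 else 0


/-- A `3 × 3` signed permutation matrix: a permutation matrix with some entries negated. -/
def IsSignedPerm (g : Matrix (Fin 3) (Fin 3) ℝ) : Prop :=
  ∃ σ : Equiv.Perm (Fin 3), ∃ ε : Fin 3 → ℝ, (∀ i, ε i = 1 ∨ ε i = -1) ∧
    ∀ i j, g i j = if j = σ i then ε i else 0

/-! A signed permutation matrix permutes the coordinates of a vector and changes some of their
signs, so it preserves the multiset of absolute values of the coordinates, which is all that
membership in `PS` depends on. Conversely, if `a` and `b` have the same multiset of absolute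
values, a permutation `σ` with `|b i| = |a (σ i)|` exists, and choosing the sign of each row
so that `ε i * a (σ i) = b i` gives a signed permutation matrix mapping `a` to `b`. -/

open Matrix

theorem exists_perm_comp_eq_of_map_univ_val_eq {ι α : Type*} [Fintype ι] {f g : ι → α}
    (h : Finset.univ.val.map f = Finset.univ.val.map g) :
    ∃ σ : Equiv.Perm ι, ∀ i, g i = f (σ i) := by
  classical
  have hfiber (c : α) : Fintype.card {i // g i = c} = Fintype.card {i // f i = c} := by
    have hcount := congrArg (Multiset.count c) h.symm
    simp only [Multiset.count_map, eq_comm (a := c)] at hcount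
    simpa only [Fintype.card_subtype, Finset.card_def, Finset.filter_val] using hcount
  exact ⟨Equiv.ofFiberEquiv fun c => Fintype.equivOfCardEq (hfiber c),
    fun i => (Equiv.ofFiberEquiv_map _ i).symm⟩

theorem mulVec_eq_of_apply_eq_ite {n R : Type*} [Fintype n] [DecidableEq n]
    [NonUnitalNonAssocSemiring R] {σ : Equiv.Perm n} {ε : n → R} {g : Matrix n n R}
    (hg : ∀ i j, g i j = if j = σ i then ε i else 0) (v : n → R) :
    g *ᵥ v = fun i => ε i * v (σ i) := by
  ext i
  simp [mulVec, dotProduct, hg]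

theorem map_mulVecLin_span_singleton {m n R : Type*} [Fintype n] [CommSemiring R]
    (g : Matrix m n R) (v : n → R) :
    Submodule.map g.mulVecLin (Submodule.span R {v}) = Submodule.span R {g *ᵥ v} := by
  rw [Submodule.map_span, Set.image_singleton, mulVecLin_apply]

theorem absCoords_eq_map_univ_val (x : V3) :
    absCoords x = Finset.univ.val.map fun i => |x i| := by
  simp only [Fin.univ_val_map, List.ofFn_succ, List.ofFn_zero]
  rfl

theorem ne_zero_of_absCoords_eq {x y : V3} (h : absCoords x = absCoords y) (hx : x ≠ 0) :
    y ≠ 0 := by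
  rintro rfl
  refine hx (funext fun i => abs_eq_zero.mp ?_)
  have hmem : |x i| ∈ absCoords (0 : V3) := by
    rw [← h, absCoords_eq_map_univ_val]
    exact Multiset.mem_map_of_mem _ (Finset.mem_univ i)
  simpa [absCoords] using hmem

theorem IsSignedPerm.absCoords_mulVec {g : Matrix (Fin 3) (Fin 3) ℝ} (hg : IsSignedPerm g)
    (v : V3) : absCoords (g *ᵥ v) = absCoords v := by
  obtain ⟨σ, ε, hε, hgσ⟩ := hg
  have hε_abs (i : Fin 3) : |ε i| = 1 := by rcases hε i with h | h <;> simp [h]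
  rw [mulVec_eq_of_apply_eq_ite hgσ, absCoords_eq_map_univ_val, absCoords_eq_map_univ_val]
  simp only [abs_mul, hε_abs, one_mul]
  conv_rhs => rw [← Multiset.map_univ_val_equiv σ, Multiset.map_map]
  rfl

theorem exists_isSignedPerm_mulVec_eq_of_absCoords_eq {a b : V3}
    (h : absCoords a = absCoords b) :
    ∃ g : Matrix (Fin 3) (Fin 3) ℝ, IsSignedPerm g ∧ g *ᵥ a = b := by
  rw [absCoords_eq_map_univ_val, absCoords_eq_map_univ_val] at h
  obtain ⟨σ, hσ⟩ := exists_perm_comp_eq_of_map_univ_val_eq h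
  let ε : Fin 3 → ℝ := fun i => if b i = a (σ i) then 1 else -1
  let g : Matrix (Fin 3) (Fin 3) ℝ := Matrix.of fun i j => if j = σ i then ε i else 0
  have hgσ : ∀ i j, g i j = if j = σ i then ε i else 0 := fun _ _ => rfl
  refine ⟨g, ⟨σ, ε, fun i => by unfold ε; split_ifs <;> simp, hgσ⟩, ?_⟩
  rw [mulVec_eq_of_apply_eq_ite hgσ]
  ext i
  by_cases hpos : b i = a (σ i)
  · simp [ε, hpos]
  · have hneg : b i = -a (σ i) := (abs_eq_abs.mp (hσ i)).resolve_left hpos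
    simp only [ε, if_neg hpos, hneg, neg_one_mul]

/-- Every `3 × 3` signed permutation matrix maps the Peres set to itself, and any two
rays of `PS` of the same type (spanned by vectors with the same multiset of absolute
values of coordinates) are related by a signed permutation matrix. -/
theorem stmt8_symmetries_of_peres_set :
    (∀ g : Matrix (Fin 3) (Fin 3) ℝ, IsSignedPerm g →
      ∀ L ∈ PeresSet, Submodule.map g.mulVecLin L ∈ PeresSet) ∧
    (∀ L ∈ PeresSet, ∀ M ∈ PeresSet,
      (∃ a b : V3, a ≠ 0 ∧ b ≠ 0 ∧ L = Submodule.span ℝ {a} ∧ M = Submodule.span ℝ {b} ∧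
        absCoords a = absCoords b) →
      ∃ g : Matrix (Fin 3) (Fin 3) ℝ, IsSignedPerm g ∧ Submodule.map g.mulVecLin L = M) := by
  constructor
  · rintro g hg L ⟨v, hv, rfl, htype⟩
    have habs := hg.absCoords_mulVec v
    exact ⟨g *ᵥ v, ne_zero_of_absCoords_eq habs.symm hv, map_mulVecLin_span_singleton g v,
      habs ▸ htype⟩
  · rintro L - M - ⟨a, b, -, -, rfl, rfl, hab⟩
    obtain ⟨g, hg, rfl⟩ := exists_isSignedPerm_mulVec_eq_of_absCoords_eq hab
    exact ⟨g, hg, map_mulVecLin_span_singleton g a⟩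

end
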